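/- Uniform boundedness principle for operators: Let X be an F-𝔹ℂ module and, for each s in an index set S, let Y_s be a hyperbolic normed space and T_s : X → Y_s a continuous 𝔹ℂ-linear map. If for each x ∈ X the set {‖T_s(x)‖_𝔻 : s ∈ S} is 𝔻-bounded, then there exists α ∈ 𝔻⁺ such that ‖T_s(x)‖_𝔻 ≤ α‖x‖_𝔻 for all x ∈ X and all s ∈ S, i.e., the family of operator norms is 𝔻-bounded. -/

import Mathlib

noncomputable section

/-- Bicomplex numbers 𝔹ℂ in idempotent coordinates: Z = e₁z₁ + e₂z₂ ↔ (z₁, z₂). -/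
abbrev BC := ℂ × ℂ

/-- Hyperbolic numbers 𝔻 in idempotent coordinates: α = α₁e₁ + α₂e₂ ↔ (α₁, α₂). -/
abbrev Hyp := ℝ × ℝ

/-- Positive hyperbolic numbers 𝔻⁺. -/
def Dpos : Set Hyp := {a | 0 ≤ a.1 ∧ 0 ≤ a.2}

/-- The partial order α ≤ β iff β - α ∈ 𝔻⁺. -/
def dle (a b : Hyp) : Prop := b - a ∈ Dpos

/-- The hyperbolic-valued norm |Z|_k = e₁|z₁| + e₂|z₂| of a bicomplex number. -/
def knorm (z : BC) : Hyp := (‖z.1‖, ‖z.2‖)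

/-- The Euclidean modulus of a hyperbolic number α = β₁ + kβ₂, √(β₁² + β₂²),
expressed in idempotent coordinates. -/
def emod (d : Hyp) : ℝ := Real.sqrt ((d.1 ^ 2 + d.2 ^ 2) / 2)

/-- A hyperbolic-valued norm on a 𝔹ℂ-module X. -/
structure HNorm (X : Type*) [AddCommGroup X] [Module BC X] where
  toFun : X → Hyp
  pos : ∀ x, toFun x ∈ Dpos
  eq_zero_iff : ∀ x, toFun x = 0 ↔ x = 0
  hsmul : ∀ (μ : BC) (x : X), toFun (μ • x) = knorm μ * toFun x
  triangle : ∀ x y, dle (toFun (x + y)) (toFun x + toFun y)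

/-- A hyperbolic seminorm on a 𝔹ℂ-module X. -/
structure HSeminorm (X : Type*) [AddCommGroup X] [Module BC X] where
  toFun : X → Hyp
  pos : ∀ x, toFun x ∈ Dpos
  hsmul : ∀ (μ : BC) (x : X), toFun (μ • x) = knorm μ * toFun x
  triangle : ∀ x y, dle (toFun (x + y)) (toFun x + toFun y)

variable {X : Type*} [AddCommGroup X] [Module BC X]

/-- The real-valued distance induced by a hyperbolic norm. -/
def HNorm.dist (N : HNorm X) (x y : X) : ℝ := emod (N.toFun (x - y))

/-- Convergence of a sequence with respect to a hyperbolic norm. -/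
def TendstoH (N : HNorm X) (u : ℕ → X) (l : X) : Prop :=
  ∀ ε > (0 : ℝ), ∃ n₀, ∀ n ≥ n₀, N.dist (u n) l < ε

/-- Cauchy sequences with respect to a hyperbolic norm. -/
def CauchyH (N : HNorm X) (u : ℕ → X) : Prop :=
  ∀ ε > (0 : ℝ), ∃ n₀, ∀ m ≥ n₀, ∀ n ≥ n₀, N.dist (u m) (u n) < ε

/-- X is an F-𝔹ℂ module: every Cauchy sequence converges. -/
def CompleteH (N : HNorm X) : Prop :=
  ∀ u : ℕ → X, CauchyH N u → ∃ l, TendstoH N u l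

/-- The series Σ xₖ converges to s in X. -/
def SumToH (N : HNorm X) (x : ℕ → X) (s : X) : Prop :=
  TendstoH N (fun n => ∑ k ∈ Finset.range n, x k) s

/-- Convergence of a sequence of hyperbolic numbers. -/
def TendstoD (u : ℕ → Hyp) (l : Hyp) : Prop :=
  ∀ ε > (0 : ℝ), ∃ n₀, ∀ n ≥ n₀, emod (u n - l) < ε

/-- The series Σ dₖ of hyperbolic numbers converges to L. -/
def SumToD (d : ℕ → Hyp) (L : Hyp) : Prop :=
  TendstoD (fun n => ∑ k ∈ Finset.range n, d k) L

/-- Open sets in the topology induced by a hyperbolic norm. -/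
def IsOpenH (N : HNorm X) (U : Set X) : Prop :=
  ∀ x ∈ U, ∃ ε > (0 : ℝ), ∀ y, N.dist y x < ε → y ∈ U

/-- Dense sets in the topology induced by a hyperbolic norm. -/
def DenseH (N : HNorm X) (U : Set X) : Prop :=
  ∀ x : X, ∀ ε > (0 : ℝ), ∃ y ∈ U, N.dist y x < ε

/-- The closure of a set in the topology induced by a hyperbolic norm. -/
def ClosureH (N : HNorm X) (S : Set X) : Set X :=
  {x | ∀ ε > (0 : ℝ), ∃ y ∈ S, N.dist y x < ε}

/-- Continuity of a 𝔻-valued map on X (w.r.t. the hyperbolic-norm topology on X and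
the Euclidean topology on 𝔻). -/
def ContinuousHD (N : HNorm X) (p : X → Hyp) : Prop :=
  ∀ x : X, ∀ ε > (0 : ℝ), ∃ δ > (0 : ℝ), ∀ y, N.dist y x < δ → emod (p y - p x) < ε

/-- A hyperbolic seminorm is countably subadditive if whenever Σ xₖ converges to x in X and
Σ p(xₖ) converges to L in 𝔻, we have p(x) ≤ L. -/
def CountablySubadditive (N : HNorm X) (p : HSeminorm X) : Prop :=
  ∀ (x : ℕ → X) (s : X) (L : Hyp),
    SumToH N x s → SumToD (fun k => p.toFun (x k)) L → dle (p.toFun s) L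

section Maps

variable {Y : Type*} [AddCommGroup Y] [Module BC Y]

/-- 𝔹ℂ-linearity of a map between 𝔹ℂ-modules. -/
def IsBCLinear (T : X → Y) : Prop :=
  (∀ x y, T (x + y) = T x + T y) ∧ ∀ (μ : BC) (x : X), T (μ • x) = μ • T x

/-- Continuity of a map between hyperbolic normed modules. -/
def ContinuousMapH (NX : HNorm X) (NY : HNorm Y) (T : X → Y) : Prop :=
  ∀ x : X, ∀ ε > (0 : ℝ), ∃ δ > (0 : ℝ), ∀ y, NX.dist y x < δ → NY.dist (T y) (T x) < ε

/-- The graph of T is closed: xₙ → x and Txₙ → y imply Tx = y. -/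
def ClosedGraphH (NX : HNorm X) (NY : HNorm Y) (T : X → Y) : Prop :=
  ∀ (u : ℕ → X) (x : X) (y : Y),
    TendstoH NX u x → TendstoH NY (fun n => T (u n)) y → T x = y

/-- T is an open map: images of open sets are open. -/
def IsOpenMapH (NX : HNorm X) (NY : HNorm Y) (T : X → Y) : Prop :=
  ∀ U : Set X, IsOpenH NX U → IsOpenH NY (T '' U)

end Maps

section AuxUBP

lemma dle_iff' {a b : Hyp} : dle a b ↔ a.1 ≤ b.1 ∧ a.2 ≤ b.2 := by
  simp [dle, Dpos, sub_nonneg]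

lemma emod_eq_abs' (d : Hyp) : emod d = ‖(⟨d.1, d.2⟩ : ℂ)‖ / Real.sqrt 2 := by
  rw [emod, Complex.norm_def, Complex.normSq_mk,
    Real.sqrt_div (by positivity) 2]
  ring_nf

lemma emod_add_le' (a b : Hyp) : emod (a + b) ≤ emod a + emod b := by
  rw [emod_eq_abs', emod_eq_abs', emod_eq_abs']
  have h : (⟨(a + b).1, (a + b).2⟩ : ℂ) = ⟨a.1, a.2⟩ + ⟨b.1, b.2⟩ := by
    simp [Complex.ext_iff, Prod.fst_add, Prod.snd_add]
  rw [h, ← add_div]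
  gcongr
  exact norm_add_le _ _

lemma emod_mono' {a b : Hyp} (h1 : 0 ≤ a.1) (h2 : 0 ≤ a.2)
    (hb1 : a.1 ≤ b.1) (hb2 : a.2 ≤ b.2) : emod a ≤ emod b := by
  apply Real.sqrt_le_sqrt
  gcongr

lemma emod_abs_smul' (r : ℝ) (a : Hyp) :
    emod (((|r|, |r|) : Hyp) * a) = |r| * emod a := by
  have h : (((|r|, |r|) : Hyp) * a) = (|r| * a.1, |r| * a.2) := rfl
  rw [h, emod_eq_abs', emod_eq_abs']
  have h2 : (⟨|r| * a.1, |r| * a.2⟩ : ℂ) = ((|r| : ℝ) : ℂ) * ⟨a.1, a.2⟩ := by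
    simp [Complex.ext_iff]
  rw [h2, norm_mul, Complex.norm_real, Real.norm_eq_abs, abs_abs, mul_div_assoc]

lemma emod_zero' : emod (0 : Hyp) = 0 := by simp [emod]

lemma emod_single' (t : ℝ) (ht : 0 ≤ t) : emod ((t, 0) : Hyp) = t / Real.sqrt 2 := by
  rw [emod]
  simp only
  rw [show ((t, (0:ℝ)).1 ^ 2 + (t, (0:ℝ)).2 ^ 2) = t ^ 2 by norm_num,
    Real.sqrt_div (by positivity) 2, Real.sqrt_sq ht]

lemma emod_single2' (t : ℝ) (ht : 0 ≤ t) : emod ((0, t) : Hyp) = t / Real.sqrt 2 := by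
  rw [emod]
  simp only
  rw [show (((0:ℝ), t).1 ^ 2 + ((0:ℝ), t).2 ^ 2) = t ^ 2 by norm_num,
    Real.sqrt_div (by positivity) 2, Real.sqrt_sq ht]

variable {W : Type*} [AddCommGroup W] [Module BC W]

lemma hnorm_neg' (NW : HNorm W) (a : W) : NW.toFun (-a) = NW.toFun a := by
  have h := NW.hsmul (-1) a
  rw [neg_one_smul] at h
  have hk : knorm (-1 : BC) = (1 : Hyp) := by
    simp [knorm, Prod.ext_iff]
  rw [h, hk, one_mul]

lemma hnorm_emod_add' (NW : HNorm W) (a b : W) :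
    emod (NW.toFun (a + b)) ≤ emod (NW.toFun a) + emod (NW.toFun b) := by
  have ht := NW.triangle a b
  rw [dle_iff'] at ht
  calc emod (NW.toFun (a + b)) ≤ emod (NW.toFun a + NW.toFun b) :=
        emod_mono' (NW.pos _).1 (NW.pos _).2 ht.1 ht.2
    _ ≤ _ := emod_add_le' _ _

lemma hnorm_emod_sub_le' (NW : HNorm W) (a b : W) :
    emod (NW.toFun (a - b)) ≤ emod (NW.toFun a) + emod (NW.toFun b) := by
  rw [sub_eq_add_neg]
  calc emod (NW.toFun (a + -b)) ≤ emod (NW.toFun a) + emod (NW.toFun (-b)) :=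
        hnorm_emod_add' NW a (-b)
    _ = _ := by rw [hnorm_neg']

lemma hnorm_emod_rev' (NW : HNorm W) (a b : W) :
    emod (NW.toFun a) ≤ emod (NW.toFun (a - b)) + emod (NW.toFun b) := by
  have := hnorm_emod_add' NW (a - b) b
  rwa [sub_add_cancel] at this

end AuxUBP

/-- Uniform boundedness principle for operators: a pointwise 𝔻-bounded family of
continuous 𝔹ℂ-linear maps from an F-𝔹ℂ module is uniformly 𝔻-bounded. -/
theorem uniform_boundedness_operators {X : Type*} [AddCommGroup X] [Module BC X]
    (N : HNorm X) (hC : CompleteH N)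
    {S : Type*} (Y : S → Type*) [∀ s, AddCommGroup (Y s)] [∀ s, Module BC (Y s)]
    (NY : ∀ s, HNorm (Y s)) (T : ∀ s, X → Y s)
    (hlin : ∀ s, IsBCLinear (T s))
    (hcont : ∀ s, ContinuousMapH N (NY s) (T s))
    (hbdd : ∀ x : X, ∃ M ∈ Dpos, ∀ s : S, dle ((NY s).toFun (T s x)) M) :
    ∃ α ∈ Dpos, ∀ s : S, ∀ x : X, dle ((NY s).toFun (T s x)) (α * N.toFun x) := by
  classical
  -- a real module structure on X, by restriction of scalars along ℝ →+* 𝔹ℂ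
  letI : Module ℝ X := Module.compHom X (algebraMap ℝ BC)
  have hsmulR : ∀ (r : ℝ) (x : X), r • x = (algebraMap ℝ BC r) • x := fun r x => rfl
  have hkalg : ∀ r : ℝ, knorm (algebraMap ℝ BC r) = ((|r|, |r|) : Hyp) := by
    intro r
    have h1 : (algebraMap ℝ BC r) = (((r : ℂ), (r : ℂ)) : BC) := rfl
    rw [h1, knorm]
    simp
  -- the real norm on X
  letI : NormedAddCommGroup X := AddGroupNorm.toNormedAddCommGroup
    { toFun := fun x => emod (N.toFun x)
      map_zero' := by
        show emod (N.toFun 0) = 0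
        rw [(N.eq_zero_iff 0).mpr rfl, emod_zero']
      add_le' := fun x y => hnorm_emod_add' N x y
      neg' := fun x => by
        show emod (N.toFun (-x)) = emod (N.toFun x)
        rw [hnorm_neg']
      eq_zero_of_map_eq_zero' := by
        intro x hx
        have hx' : emod (N.toFun x) = 0 := hx
        rw [← N.eq_zero_iff]
        have h1 := (N.pos x).1
        have h2 := (N.pos x).2
        have hs : ((N.toFun x).1 ^ 2 + (N.toFun x).2 ^ 2) / 2 = 0 := by
          rw [emod] at hx'
          exact (Real.sqrt_eq_zero (by positivity)).mp hx'
        have e1 : (N.toFun x).1 = 0 := by nlinarith [sq_nonneg (N.toFun x).1, sq_nonneg (N.toFun x).2]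
        have e2 : (N.toFun x).2 = 0 := by nlinarith [sq_nonneg (N.toFun x).1, sq_nonneg (N.toFun x).2]
        exact Prod.ext e1 e2 }
  have hnorm : ∀ x : X, ‖x‖ = emod (N.toFun x) := fun _ => rfl
  have hdist : ∀ x y : X, dist x y = N.dist x y := by
    intro x y
    rw [dist_eq_norm, hnorm]
    rfl
  have hnsmul : ∀ (r : ℝ) (x : X), ‖r • x‖ = |r| * ‖x‖ := by
    intro r x
    rw [hnorm, hnorm, hsmulR, N.hsmul, hkalg, emod_abs_smul']
  -- completeness
  haveI : CompleteSpace X := by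
    apply Metric.complete_of_cauchySeq_tendsto
    intro u hu
    have hcauchy : CauchyH N u := by
      intro ε hε
      obtain ⟨n₀, hn₀⟩ := Metric.cauchySeq_iff.mp hu ε hε
      exact ⟨n₀, fun m hm n hn => by rw [← hdist]; exact hn₀ m hm n hn⟩
    obtain ⟨l, hl⟩ := hC u hcauchy
    refine ⟨l, Metric.tendsto_atTop.mpr ?_⟩
    intro ε hε
    obtain ⟨n₀, hn₀⟩ := hl ε hε
    exact ⟨n₀, fun n hn => by rw [hdist]; exact hn₀ n hn⟩
  -- basic facts about the T s
  have hT0 : ∀ s, T s 0 = 0 := by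
    intro s
    have := (hlin s).1 0 0
    rw [add_zero] at this
    exact left_eq_add.mp this
  set f : S → X → ℝ := fun s x => emod ((NY s).toFun (T s x)) with hf
  have hfnonneg : ∀ s x, 0 ≤ f s x := fun s x => Real.sqrt_nonneg _
  -- continuity of each f s
  have hfc : ∀ s, Continuous (f s) := by
    intro s
    rw [Metric.continuous_iff]
    intro x ε hε
    obtain ⟨δ, hδ, h⟩ := hcont s x ε hε
    refine ⟨δ, hδ, fun y hy => ?_⟩
    have h1 : (NY s).dist (T s y) (T s x) < ε := h y (by rwa [← hdist])
    rw [Real.dist_eq, abs_sub_lt_iff]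
    constructor
    · have := hnorm_emod_rev' (NY s) (T s y) (T s x)
      have h2 : (NY s).dist (T s y) (T s x) = emod ((NY s).toFun (T s y - T s x)) := rfl
      rw [h2] at h1
      simp only [hf]
      linarith
    · have := hnorm_emod_rev' (NY s) (T s x) (T s y)
      have h3 : emod ((NY s).toFun (T s x - T s y)) = emod ((NY s).toFun (T s y - T s x)) := by
        rw [show T s x - T s y = -(T s y - T s x) from (neg_sub _ _).symm, hnorm_neg']
      have h2 : (NY s).dist (T s y) (T s x) = emod ((NY s).toFun (T s y - T s x)) := rfl
      rw [h2] at h1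
      rw [h3] at this
      simp only [hf]
      linarith
  -- Baire category argument
  set E : ℕ → Set X := fun n => ⋂ s, {x | f s x ≤ n} with hE
  have hclosed : ∀ n, IsClosed (E n) :=
    fun n => isClosed_iInter fun s => isClosed_le (hfc s) continuous_const
  have hcover : (⋃ n, E n) = Set.univ := by
    rw [Set.eq_univ_iff_forall]
    intro x
    obtain ⟨M, hM, hMle⟩ := hbdd x
    obtain ⟨n, hn⟩ := exists_nat_ge (emod M)
    refine Set.mem_iUnion.mpr ⟨n, Set.mem_iInter.mpr fun s => ?_⟩
    have h1 := hMle s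
    rw [dle_iff'] at h1
    calc f s x ≤ emod M :=
          emod_mono' ((NY s).pos _).1 ((NY s).pos _).2 h1.1 h1.2
      _ ≤ n := hn
  obtain ⟨n, x₀, hx₀⟩ := nonempty_interior_of_iUnion_of_closed hclosed hcover
  rw [mem_interior_iff_mem_nhds, Metric.mem_nhds_iff] at hx₀
  obtain ⟨ε, hε, hball⟩ := hx₀
  have hx₀n : ∀ s, f s x₀ ≤ n := by
    intro s
    have : x₀ ∈ E n := hball (Metric.mem_ball_self hε)
    exact Set.mem_iInter.mp this s
  -- small vectors
  have hsmall : ∀ s, ∀ z : X, ‖z‖ < ε → f s z ≤ 2 * n := by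
    intro s z hz
    have hmem : x₀ + z ∈ E n := by
      apply hball
      rw [Metric.mem_ball, hdist]
      show emod (N.toFun (x₀ + z - x₀)) < ε
      rw [show x₀ + z - x₀ = z from add_sub_cancel_left x₀ z]
      exact hz
    have h1 : f s (x₀ + z) ≤ n := Set.mem_iInter.mp hmem s
    have hTz : T s z = T s (x₀ + z) - T s x₀ := by
      rw [(hlin s).1 x₀ z, add_sub_cancel_left]
    have := hnorm_emod_sub_le' (NY s) (T s (x₀ + z)) (T s x₀)
    rw [← hTz] at this
    have := hx₀n s
    simp only [hf] at *
    linarith [hnorm_emod_sub_le' (NY s) (T s (x₀ + z)) (T s x₀), hx₀n s, h1,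
      show emod ((NY s).toFun (T s z)) = emod ((NY s).toFun (T s (x₀ + z) - T s x₀)) by rw [← hTz]]
  -- uniform real bound
  set C : ℝ := 4 * n / ε with hCdef
  have hC0 : 0 ≤ C := by positivity
  have hkey : ∀ s, ∀ x : X, f s x ≤ C * ‖x‖ := by
    intro s x
    by_cases hx : x = 0
    · subst hx
      rw [hf]
      simp only
      rw [hT0 s, (NY s).eq_zero_iff (0 : Y s) |>.mpr rfl, emod_zero']
      positivity
    · have hxn : (0 : ℝ) < ‖x‖ := by
        rw [norm_pos_iff]
        exact hx
      set r : ℝ := ε / (2 * ‖x‖) with hr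
      have hr0 : 0 < r := by positivity
      have hne : ‖x‖ ≠ 0 := ne_of_gt hxn
      have hz : ‖r • x‖ < ε := by
        rw [hnsmul, abs_of_pos hr0]
        have hrx : r * ‖x‖ = ε / 2 := by
          rw [hr]; field_simp
        rw [hrx]; linarith
      have h2 := hsmall s (r • x) hz
      -- f s x = r⁻¹ * f s (r • x)
      have hxz : x = r⁻¹ • (r • x) := by
        rw [smul_smul, inv_mul_cancel₀ (ne_of_gt hr0), one_smul]
      have hfx : f s x = |r⁻¹| * f s (r • x) := by
        conv_lhs => rw [hxz]
        rw [hf]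
        simp only
        rw [hsmulR, (hlin s).2, (NY s).hsmul, hkalg, emod_abs_smul']
      rw [hfx, abs_of_pos (inv_pos.mpr hr0)]
      have : r⁻¹ = 2 * ‖x‖ / ε := by
        rw [hr, inv_div]
      rw [this]
      calc 2 * ‖x‖ / ε * f s (r • x) ≤ 2 * ‖x‖ / ε * (2 * n) := by
            apply mul_le_mul_of_nonneg_left h2 (by positivity)
        _ = C * ‖x‖ := by rw [hCdef]; field_simp; ring
  -- transfer to componentwise bound using the idempotents e₁, e₂
  refine ⟨(C, C), ⟨hC0, hC0⟩, fun s x => ?_⟩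
  rw [dle_iff']
  have hs2 : (0 : ℝ) < Real.sqrt 2 := by positivity
  constructor
  · -- first component, via e₁ = (1,0)
    set e : BC := ((1 : ℂ), (0 : ℂ)) with he
    have hke : knorm e = ((1, 0) : Hyp) := by simp [knorm, he]
    have h1 := hkey s (e • x)
    rw [hf] at h1
    simp only at h1
    rw [(hlin s).2, (NY s).hsmul, hke, hnorm, N.hsmul, hke] at h1
    have hA : (((1, 0) : Hyp) * (NY s).toFun (T s x)) = ((((NY s).toFun (T s x)).1, 0) : Hyp) := by
      ext <;> simp
    have hB : (((1, 0) : Hyp) * N.toFun x) = (((N.toFun x).1, 0) : Hyp) := by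
      ext <;> simp
    rw [hA, hB, emod_single' _ ((NY s).pos _).1, emod_single' _ (N.pos _).1] at h1
    rw [← mul_div_assoc] at h1
    have := (div_le_div_iff_of_pos_right hs2).mp h1
    show ((NY s).toFun (T s x)).1 ≤ C * (N.toFun x).1
    linarith
  · -- second component, via e₂ = (0,1)
    set e : BC := ((0 : ℂ), (1 : ℂ)) with he
    have hke : knorm e = ((0, 1) : Hyp) := by simp [knorm, he]
    have h1 := hkey s (e • x)
    rw [hf] at h1
    simp only at h1
    rw [(hlin s).2, (NY s).hsmul, hke, hnorm, N.hsmul, hke] at h1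
    have hA : (((0, 1) : Hyp) * (NY s).toFun (T s x)) = ((0, ((NY s).toFun (T s x)).2) : Hyp) := by
      ext <;> simp
    have hB : (((0, 1) : Hyp) * N.toFun x) = ((0, (N.toFun x).2) : Hyp) := by
      ext <;> simp
    rw [hA, hB, emod_single2' _ ((NY s).pos _).2, emod_single2' _ (N.pos _).2] at h1
    rw [← mul_div_assoc] at h1
    have := (div_le_div_iff_of_pos_right hs2).mp h1
    show ((NY s).toFun (T s x)).2 ≤ C * (N.toFun x).2
    linarith
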